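/- arXiv:1604.04904 — 3 statements merged into one kernel-verified Lean document; each statement's English description precedes it below -/
import Mathlib

section
/- Let h and k be coprime odd positive integers. Then B₁(h,k) = (h/(4k))·Y(h,k) + 1/(2k) - 1/2. -/
/-- The sawtooth function `((x))`: equals `x - ⌊x⌋ - 1/2` if `x` is not an integer,
and `0` if `x` is an integer. -/
def saw (x : ℚ) : ℚ := if x = (⌊x⌋ : ℚ) then 0 else x - ⌊x⌋ - 1/2

/-- `B₁(h,k) = Σ_{j=1}^{k-1} (-1)^{j+⌊hj/k⌋}·⌊hj/k⌋`. -/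
noncomputable def B1 (h k : ℤ) : ℚ :=
  ∑ j ∈ Finset.Icc (1 : ℤ) (k - 1),
    (-1 : ℚ) ^ (j + ⌊((h * j : ℤ) : ℚ) / (k : ℚ)⌋) * (⌊((h * j : ℤ) : ℚ) / (k : ℚ)⌋ : ℚ)

/-- The Simsek sum `Y(h,k) = 4k·Σ_{j=1}^{k} (-1)^{j+⌊hj/k⌋}·((j/k))`. -/
noncomputable def simsekY (h k : ℤ) : ℚ :=
  4 * k * ∑ j ∈ Finset.Icc (1 : ℤ) k,
    (-1 : ℚ) ^ (j + ⌊((h * j : ℤ) : ℚ) / (k : ℚ)⌋) * saw ((j : ℚ) / (k : ℚ))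

/-! Write `h * j = k * q + r` with `r = h * j % k`. Since `h` and `k` are odd,
`j + q ≡ r (mod 2)`, so the `j`-th summand of `B₁` minus `h / (4k)` times that of `Y` is
`(-1)^r (h/2 - r/k)`. As `j ↦ h * j % k` permutes `{1, …, k - 1}`, the difference
`B₁ - h/(4k) Y` is the alternating sum `∑_{r=1}^{k-1} (-1)^r (h/2 - r/k) = -(k - 1)/(2k)`. -/

theorem Int.floor_intCast_div_intCast {α : Type*} [Field α] [LinearOrder α]
    [IsStrictOrderedRing α] [FloorRing α] (a : ℤ) {b : ℤ} (hb : 0 ≤ b) : ⌊(a : α) / b⌋ = a / b := by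
  lift b to ℕ using hb
  simpa using Int.floor_div_natCast (a : α) b

theorem saw_div_of_pos_of_lt {j k : ℤ} (hj : 0 < j) (hjk : j < k) :
    saw ((j : ℚ) / k) = j / k - 1 / 2 := by
  have hfloor : ⌊(j : ℚ) / k⌋ = 0 := by
    rw [Int.floor_intCast_div_intCast j (by omega), Int.ediv_eq_zero_of_lt hj.le hjk]
  have hpos : (0 : ℚ) < j / k := div_pos (by exact_mod_cast hj) (by exact_mod_cast hj.trans hjk)
  rw [saw, hfloor, Int.cast_zero, if_neg hpos.ne', sub_zero]

theorem neg_one_zpow_eq_of_even_sub {R : Type*} [DivisionRing R] {m n : ℤ} (h : Even (m - n)) :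
    (-1 : R) ^ m = (-1 : R) ^ n := by
  rw [← sub_add_cancel m n, zpow_add₀ (neg_ne_zero.2 one_ne_zero), h.neg_one_zpow, one_mul]

theorem neg_one_zpow_add_ediv {R : Type*} [DivisionRing R] {h k : ℤ} (hh : Odd h) (hk : Odd k)
    (j : ℤ) : (-1 : R) ^ (j + h * j / k) = (-1 : R) ^ (h * j % k) := by
  apply neg_one_zpow_eq_of_even_sub
  have : j + h * j / k - h * j % k = (1 - h) * j + (k + 1) * (h * j / k) := by
    rw [Int.emod_def]; ring
  rw [this]
  exact ((odd_one.sub_odd hh).mul_right j).add ((hk.add_one).mul_right _)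

theorem IsCoprime.sum_Icc_emod_mul {M : Type*} [AddCommMonoid M] {h k : ℤ} (hco : IsCoprime h k)
    (f : ℤ → M) :
    ∑ j ∈ Finset.Icc 1 (k - 1), f (h * j % k) = ∑ j ∈ Finset.Icc 1 (k - 1), f j := by
  rcases le_or_gt k 0 with hk | hk
  · rw [Finset.Icc_eq_empty (by omega), Finset.sum_empty, Finset.sum_empty]
  have hmaps : Set.MapsTo (fun j => h * j % k) (Finset.Icc 1 (k - 1)) (Finset.Icc 1 (k - 1)) := by
    intro j hj
    simp only [Finset.coe_Icc, Set.mem_Icc] at hj ⊢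
    have hne : h * j % k ≠ 0 := fun h0 => by
      have := Int.le_of_dvd (by omega) (hco.symm.dvd_of_dvd_mul_left (Int.dvd_of_emod_eq_zero h0))
      omega
    have := Int.emod_nonneg (h * j) hk.ne'
    have := Int.emod_lt_of_pos (h * j) hk
    omega
  have hinj : Set.InjOn (fun j => h * j % k) (Finset.Icc 1 (k - 1)) := by
    intro i hi j hj hij
    simp only [Finset.coe_Icc, Set.mem_Icc] at hi hj
    have hdvd : k ∣ i - j := hco.symm.dvd_of_dvd_mul_left <| by
      rw [mul_sub]; exact Int.ModEq.dvd hij.symm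
    have := Int.eq_zero_of_abs_lt_dvd hdvd (by rw [abs_lt]; omega)
    omega
  exact Finset.sum_nbij _ hmaps hinj
    (Finset.surjOn_of_injOn_of_card_le _ hmaps hinj le_rfl) (fun _ _ => rfl)

theorem sum_Icc_neg_one_zpow_mul_sub {K : Type*} [Field K] (c d : K) (n : ℕ) :
    ∑ r ∈ Finset.Icc (1 : ℤ) (2 * n), (-1 : K) ^ r * (c - r / d) = -n / d := by
  induction n with
  | zero => simp
  | succ n ih =>
    have hIcc : Finset.Icc (1 : ℤ) (2 * (n + 1 : ℕ)) =
        insert (2 * (n : ℤ) + 2) (insert (2 * (n : ℤ) + 1) (Finset.Icc 1 (2 * (n : ℤ)))) := by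
      ext r; simp only [Finset.mem_Icc, Finset.mem_insert]; push_cast; omega
    rw [hIcc, Finset.sum_insert (by simp), Finset.sum_insert (by simp), ih]
    have hodd : (-1 : K) ^ (2 * (n : ℤ) + 1) = -1 := (odd_two_mul_add_one _).neg_one_zpow
    have heven : (-1 : K) ^ (2 * (n : ℤ) + 2) = 1 := Even.neg_one_zpow ⟨n + 1, by ring⟩
    rw [hodd, heven]; push_cast; ring

theorem B1_summand_sub_mul_simsekY_summand {h k j : ℤ} (hho : Odd h) (hko : Odd k) (hj : 0 < j)
    (hjk : j < k) :
    (-1 : ℚ) ^ (j + ⌊((h * j : ℤ) : ℚ) / k⌋) * ⌊((h * j : ℤ) : ℚ) / k⌋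
      - h * ((-1 : ℚ) ^ (j + ⌊((h * j : ℤ) : ℚ) / k⌋) * saw ((j : ℚ) / k))
      = (-1 : ℚ) ^ (h * j % k) * (h / 2 - ((h * j % k : ℤ) : ℚ) / k) := by
  have hk : (k : ℚ) ≠ 0 := by exact_mod_cast (hj.trans hjk).ne'
  have hdiv : ((h * j / k : ℤ) : ℚ) = (h * j - ((h * j % k : ℤ) : ℚ)) / k := by
    rw [eq_div_iff hk, Int.emod_def]; push_cast; ring
  rw [Int.floor_intCast_div_intCast _ (hj.trans hjk).le, neg_one_zpow_add_ediv hho hko,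
    saw_div_of_pos_of_lt hj hjk, hdiv]
  field_simp
  ring

theorem B1_sub_mul_simsekY {h k : ℤ} (hho : Odd h) (hko : Odd k) (hk : 0 < k) :
    B1 h k - h / (4 * k) * simsekY h k
      = ∑ j ∈ Finset.Icc 1 (k - 1),
          (-1 : ℚ) ^ (h * j % k) * (h / 2 - ((h * j % k : ℤ) : ℚ) / k) := by
  have hsaw_one : saw ((k : ℚ) / k) = 0 := by
    rw [div_self (by exact_mod_cast hk.ne'), saw]; norm_num
  have hIcc : Finset.Icc 1 k = insert k (Finset.Icc 1 (k - 1)) := by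
    ext x; simp only [Finset.mem_Icc, Finset.mem_insert]; omega
  have hY : h / (4 * k) * simsekY h k = h * ∑ j ∈ Finset.Icc 1 (k - 1),
      (-1 : ℚ) ^ (j + ⌊((h * j : ℤ) : ℚ) / k⌋) * saw ((j : ℚ) / k) := by
    rw [simsekY, hIcc, Finset.sum_insert (by simp), hsaw_one, mul_zero, zero_add]
    field_simp
  rw [hY, B1, Finset.mul_sum, ← Finset.sum_sub_distrib]
  refine Finset.sum_congr rfl fun j hj => ?_
  rw [Finset.mem_Icc] at hj
  exact B1_summand_sub_mul_simsekY_summand hho hko (by omega) (by omega)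

theorem stmt_2_general (h k : ℤ) (hk : 0 < k) (hco : IsCoprime h k)
    (hho : Odd h) (hko : Odd k) :
    B1 h k = ((h : ℚ) / (4 * (k : ℚ))) * simsekY h k + 1 / (2 * (k : ℚ)) - 1 / 2 := by
  have hdiff := B1_sub_mul_simsekY hho hko hk
  rw [hco.sum_Icc_emod_mul fun r => (-1 : ℚ) ^ r * (h / 2 - (r : ℚ) / k)] at hdiff
  obtain ⟨n, rfl⟩ := hko
  lift n to ℕ using (by omega)
  rw [add_sub_cancel_right, sum_Icc_neg_one_zpow_mul_sub] at hdiff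
  have hk0 : (2 * (n : ℚ) + 1) ≠ 0 := by positivity
  rw [← sub_eq_zero, ← sub_eq_zero.2 hdiff]
  push_cast
  field_simp
  ring

theorem stmt_2 (h k : ℤ) (hh : 0 < h) (hk : 0 < k) (hco : IsCoprime h k)
    (hho : Odd h) (hko : Odd k) :
    B1 h k = ((h : ℚ) / (4 * (k : ℚ))) * simsekY h k + 1 / (2 * (k : ℚ)) - 1 / 2 :=
  stmt_2_general h k hk hco hho hko
end

section
/- Let h and k be coprime positive integers with h + k odd. Then B₁(h,k) = (1-h)·(4·s(h,2k) + 4·s(2h,k) - 10·s(h,k)). -/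
/-- The Dedekind sum `s(h,k) = Σ_{j=1}^{k-1} ((hj/k))·((j/k))`. -/
noncomputable def dedekindS (h k : ℤ) : ℚ :=
  ∑ j ∈ Finset.Icc (1 : ℤ) (k - 1),
    saw (((h * j : ℤ) : ℚ) / (k : ℚ)) * saw ((j : ℚ) / (k : ℚ))

/-!
Put `S(h,k) = ∑_{j=1}^{k-1} (-1)^(j + ⌊hj/k⌋)` (`signSum`). The reflection `j ↦ k - j` sends
`⌊hj/k⌋` to `h - 1 - ⌊hj/k⌋` and, as `h + k` is odd, keeps the sign, so
`2 B₁(h,k) = (h - 1) S(h,k)`. It remains to see that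
`D(h,k) = 4 s(h,2k) + 4 s(2h,k) - 10 s(h,k)` (`dedekindComb`) equals `-S(h,k)/2`.
Both sides are odd and `2k`-periodic in `h`, and they obey matching reciprocity laws
`D(h,k) + D(k,h) = 1/2` and `S(h,k) + S(k,h) = -1`: the first follows from Dedekind reciprocity
and `s(2a,2m) = s(a,m)`, the second from counting lattice points below the line
`y = (h+k)x/(2k)`. A Euclidean descent on `k` concludes.
-/

open Finset

lemma saw_eq_fract (x : ℚ) : saw x = if Int.fract x = 0 then 0 else Int.fract x - 1 / 2 := by
  simp only [saw, Int.fract, sub_eq_zero]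

lemma saw_add_intCast (x : ℚ) (n : ℤ) : saw (x + n) = saw x := by
  simp only [saw_eq_fract, Int.fract_add_intCast]

lemma saw_neg (x : ℚ) : saw (-x) = -saw x := by
  by_cases hx : Int.fract x = 0
  · simp [saw_eq_fract, hx, Int.fract_neg_eq_zero]
  · have hx' : 1 - Int.fract x ≠ 0 := by linarith [Int.fract_lt_one x]
    rw [saw_eq_fract, saw_eq_fract, Int.fract_neg hx, if_neg hx, if_neg hx']
    ring

lemma saw_eq_of_lt_of_lt {x : ℚ} {n : ℤ} (h₀ : n < x) (h₁ : x < n + 1) :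
    saw x = x - n - 1 / 2 := by
  rw [saw, Int.floor_eq_iff.mpr ⟨h₀.le, h₁⟩, if_neg h₀.ne']

lemma saw_add_saw_add_half (x : ℚ) : saw x + saw (x + 1 / 2) = saw (2 * x) := by
  obtain ⟨y, n, hy₀, hy₁, rfl⟩ : ∃ (y : ℚ) (n : ℤ), 0 ≤ y ∧ y < 1 ∧ x = y + n :=
    ⟨Int.fract x, ⌊x⌋, Int.fract_nonneg x, Int.fract_lt_one x, (Int.fract_add_floor x).symm⟩
  rw [saw_add_intCast, add_right_comm, saw_add_intCast, mul_add,
    show (2 : ℚ) * n = ((2 * n : ℤ) : ℚ) by push_cast; ring, saw_add_intCast]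
  rcases hy₀.eq_or_lt with rfl | hy₀
  · norm_num [saw]
  rcases lt_trichotomy y (1 / 2) with hy | rfl | hy
  · rw [saw_eq_of_lt_of_lt (n := 0) (by push_cast; linarith) (by push_cast; linarith),
      saw_eq_of_lt_of_lt (n := 0) (by push_cast; linarith) (by push_cast; linarith),
      saw_eq_of_lt_of_lt (n := 0) (by push_cast; linarith) (by push_cast; linarith)]
    ring
  · norm_num [saw]
  · rw [saw_eq_of_lt_of_lt (n := 0) (by push_cast; linarith) (by push_cast; linarith),
      saw_eq_of_lt_of_lt (n := 1) (by push_cast; linarith) (by push_cast; linarith),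
      saw_eq_of_lt_of_lt (n := 1) (by push_cast; linarith) (by push_cast; linarith)]
    ring

lemma Rat.floor_intCast_div_intCast (a : ℤ) {b : ℤ} (hb : 0 < b) :
    ⌊(a : ℚ) / b⌋ = a / b := by
  lift b to ℕ using hb.le
  exact Rat.floor_intCast_div_natCast a b

lemma saw_intCast_div {a b : ℤ} (hb : 0 < b) (h : ¬ b ∣ a) :
    saw ((a : ℚ) / b) = a / b - (a / b : ℤ) - 1 / 2 := by
  rw [saw, Rat.floor_intCast_div_intCast a hb, if_neg]
  rw [div_eq_iff (by positivity)]
  exact_mod_cast fun h' => h ⟨a / b, by linarith⟩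

lemma Int.ediv_add_ediv_of_dvd_add {b x y : ℤ} (hb : 0 < b) (hx : ¬ b ∣ x)
    (hxy : b ∣ x + y) :
    x / b + y / b = (x + y) / b - 1 := by
  obtain ⟨c, hc⟩ := hxy
  rw [hc, show y = -x + b * c by linarith, Int.add_mul_ediv_left _ _ hb.ne', Int.neg_ediv,
    if_neg hx, Int.sign_eq_one_of_pos hb, Int.mul_ediv_cancel_left _ hb.ne']
  ring

lemma not_dvd_mul_of_isCoprime {a b j : ℤ} (hab : IsCoprime a b) (hj₀ : 0 < j) (hjb : j < b) :
    ¬ b ∣ a * j := fun hd =>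
  hj₀.ne' (Int.eq_zero_of_dvd_of_nonneg_of_lt hj₀.le hjb (hab.symm.dvd_of_dvd_mul_left hd))

lemma card_Icc_cast {a b : ℤ} (h : a ≤ b + 1) : ((Icc a b).card : ℚ) = b + 1 - a := by
  rw [Int.card_Icc]
  exact_mod_cast Int.toNat_of_nonneg (by omega)

lemma sum_Icc_one_add_one (F : ℤ → ℚ) {n : ℤ} (hn : 0 ≤ n) :
    ∑ j ∈ Icc 1 (n + 1), F j = ∑ j ∈ Icc 1 n, F j + F (n + 1) := by
  rw [← Ico_insert_right (by omega), sum_insert (by simp), add_comm,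
    show Ico 1 (n + 1) = Icc 1 n by ext; simp]

lemma sum_Icc_one_id {n : ℤ} (hn : 0 ≤ n) : ∑ j ∈ Icc 1 n, (j : ℚ) = n * (n + 1) / 2 := by
  induction n, hn using Int.leInduction with
  | base => simp
  | succ n hn ih => rw [sum_Icc_one_add_one _ hn, ih]; push_cast; ring

lemma sum_Icc_one_sq {n : ℤ} (hn : 0 ≤ n) :
    ∑ j ∈ Icc 1 n, (j : ℚ) ^ 2 = n * (n + 1) * (2 * n + 1) / 6 := by
  induction n, hn using Int.leInduction with
  | base => simp
  | succ n hn ih => rw [sum_Icc_one_add_one _ hn, ih]; push_cast; ring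

lemma sum_Icc_one_reflect (n : ℤ) (F : ℤ → ℚ) :
    ∑ j ∈ Icc 1 n, F j = ∑ j ∈ Icc 1 n, F (n + 1 - j) :=
  sum_equiv (Equiv.subLeft (n + 1)) (by intro j; simp; omega) (by simp)

lemma sum_Icc_one_ite_mul_le {c d p : ℤ} (hd : 0 < d) (hcp : c / d ≤ p) (f : ℤ → ℚ) :
    ∑ m ∈ Icc 1 p, (if d * m ≤ c then f m else 0) = ∑ m ∈ Icc 1 (c / d), f m := by
  rw [← sum_filter]
  congr 1
  ext m
  have := Int.le_ediv_iff_mul_le hd (a := m) (b := c)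
  simp only [mem_filter, mem_Icc, mul_comm d m]
  constructor <;> intro <;> omega

lemma sum_Icc_one_ite_le_mul {c e n : ℤ} (hc : 0 < c) (he : 0 ≤ e) (hen : e / c ≤ n)
    (hndvd : ¬ c ∣ e) (x : ℚ) :
    ∑ j ∈ Icc 1 n, (if e ≤ c * j then x else 0) = ((n - e / c : ℤ) : ℚ) * x := by
  have hfilter : filter (fun j => e ≤ c * j) (Icc 1 n) = Icc (e / c + 1) n := by
    ext j
    have h₁ := Int.ediv_lt_iff_lt_mul hc (a := e) (b := j)
    have h₂ : e ≠ c * j := fun h => hndvd ⟨j, h⟩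
    have h₃ := Int.ediv_nonneg he hc.le
    simp only [mem_filter, mem_Icc, mul_comm c j] at h₂ ⊢
    constructor <;> intro <;> omega
  rw [← sum_filter, hfilter, sum_const, nsmul_eq_mul, card_Icc_cast (by omega)]
  push_cast
  ring

/-- Both sides count the lattice points `(j, m)` with `1 ≤ j ≤ n`, `1 ≤ m` and `d m ≤ c j`,
with weight `f m`; `hndvd` says that no such point lies on the line `d m = c j`. -/
theorem sum_sum_Icc_mul_ediv_comm {c d n p : ℤ} (hc : 0 < c) (hd : 0 < d)
    (hnp : c * n / d ≤ p) (hpn : d * p / c ≤ n) (hndvd : ∀ m ∈ Icc 1 p, ¬ c ∣ d * m)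
    (f : ℤ → ℚ) :
    ∑ j ∈ Icc 1 n, ∑ m ∈ Icc 1 (c * j / d), f m
      = ∑ m ∈ Icc 1 p, ((n - d * m / c : ℤ) : ℚ) * f m :=
  calc _ = ∑ j ∈ Icc 1 n, ∑ m ∈ Icc 1 p, if d * m ≤ c * j then f m else 0 := by
        refine sum_congr rfl fun j hj => (sum_Icc_one_ite_mul_le hd ?_ f).symm
        have hjn := (mem_Icc.mp hj).2
        exact (Int.ediv_le_ediv hd (by nlinarith)).trans hnp
    _ = ∑ m ∈ Icc 1 p, ∑ j ∈ Icc 1 n, if d * m ≤ c * j then f m else 0 := sum_comm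
    _ = _ := by
        refine sum_congr rfl fun m hm => sum_Icc_one_ite_le_mul hc ?_ ?_ (hndvd m hm) (f m)
        · nlinarith [(mem_Icc.mp hm).1]
        · have hmp := (mem_Icc.mp hm).2
          exact (Int.ediv_le_ediv hc (by nlinarith)).trans hpn

lemma mul_ediv_add_mul_sub_ediv {a b j : ℤ} (hb : 0 < b) (hab : IsCoprime a b)
    (hj : j ∈ Icc 1 (b - 1)) : a * j / b + a * (b - j) / b = a - 1 := by
  rw [mem_Icc] at hj
  rw [Int.ediv_add_ediv_of_dvd_add hb (not_dvd_mul_of_isCoprime hab (by omega) (by omega))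
    ⟨a, by ring⟩, show a * j + a * (b - j) = b * a by ring, Int.mul_ediv_cancel_left _ hb.ne']

lemma sum_Icc_mul_ediv {a b : ℤ} (hb : 0 < b) (hab : IsCoprime a b) :
    ∑ j ∈ Icc 1 (b - 1), ((a * j / b : ℤ) : ℚ) = (a - 1) * (b - 1) / 2 := by
  have hpair : ∀ j ∈ Icc 1 (b - 1),
      ((a * j / b : ℤ) : ℚ) + ((a * (b - 1 + 1 - j) / b : ℤ) : ℚ) = a - 1 := fun j hj => by
    rw [sub_add_cancel]
    exact_mod_cast mul_ediv_add_mul_sub_ediv hb hab hj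
  have h := sum_congr rfl hpair
  rw [sum_add_distrib, ← sum_Icc_one_reflect (b - 1) fun j => ((a * j / b : ℤ) : ℚ),
    sum_const, nsmul_eq_mul, card_Icc_cast (by omega)] at h
  push_cast at h
  linarith

lemma mul_sub_one_ediv_lt {a b : ℤ} (ha : 0 < a) (hb : 0 < b) : a * (b - 1) / b < a :=
  (Int.ediv_lt_iff_lt_mul hb).mpr (by nlinarith)

noncomputable def sumMulFloor (a b : ℤ) : ℚ :=
  ∑ j ∈ Icc 1 (b - 1), (j : ℚ) * ((a * j / b : ℤ) : ℚ)

noncomputable def sumFloorSq (a b : ℤ) : ℚ :=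
  ∑ j ∈ Icc 1 (b - 1), ((a * j / b : ℤ) : ℚ) ^ 2

lemma sumFloorSq_eq_sumMulFloor_swap {a b : ℤ} (ha : 0 < a) (hb : 0 < b)
    (hab : IsCoprime a b) :
    sumFloorSq a b = (a - 1) * (b - 1) * (2 * a - 1) / 2 - 2 * sumMulFloor b a := by
  have hgauss : ∀ j ∈ Icc 1 (b - 1), ((a * j / b : ℤ) : ℚ) ^ 2 + ((a * j / b : ℤ) : ℚ)
      = 2 * ∑ m ∈ Icc 1 (a * j / b), (m : ℚ) := fun j hj => by
    rw [sum_Icc_one_id (Int.ediv_nonneg (by nlinarith [(mem_Icc.mp hj).1]) hb.le)]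
    ring
  have hswap := sum_sum_Icc_mul_ediv_comm (n := b - 1) (p := a - 1) ha hb
    (by linarith [mul_sub_one_ediv_lt ha hb]) (by linarith [mul_sub_one_ediv_lt hb ha])
    (fun m hm => not_dvd_mul_of_isCoprime hab.symm (mem_Icc.mp hm).1
      (by linarith [(mem_Icc.mp hm).2]))
    fun m => (m : ℚ)
  have h := sum_congr rfl hgauss
  rw [sum_add_distrib, sum_Icc_mul_ediv hb hab, ← mul_sum, hswap] at h
  have hcount : ∀ m ∈ Icc 1 (a - 1), ((b - 1 - b * m / a : ℤ) : ℚ) * m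
      = (b - 1) * m - m * ((b * m / a : ℤ) : ℚ) := fun m _ => by push_cast; ring
  rw [sum_congr rfl hcount, sum_sub_distrib, ← mul_sum, sum_Icc_one_id (by omega)] at h
  rw [sumFloorSq, sumMulFloor]
  push_cast at h
  linarith

lemma saw_mul_div_of_mem_Icc {a b j : ℤ} (hb : 0 < b) (hab : IsCoprime a b)
    (hj : j ∈ Icc 1 (b - 1)) :
    saw (((a * j : ℤ) : ℚ) / b) = a * j / b - ((a * j / b : ℤ) : ℚ) - 1 / 2 := by
  rw [mem_Icc] at hj
  rw [saw_intCast_div hb (not_dvd_mul_of_isCoprime hab (by omega) (by omega))]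
  push_cast
  ring

lemma saw_div_of_mem_Icc {b j : ℤ} (hb : 0 < b) (hj : j ∈ Icc 1 (b - 1)) :
    saw ((j : ℚ) / b) = j / b - 1 / 2 := by
  have h := saw_mul_div_of_mem_Icc hb isCoprime_one_left hj
  rw [mem_Icc] at hj
  simpa [Int.ediv_eq_zero_of_lt (by omega : 0 ≤ j) (by omega : j < b)] using h

lemma dedekindS_eq_sumMulFloor {a b : ℤ} (hb : 0 < b) (hab : IsCoprime a b) :
    12 * b * dedekindS a b = 2 * a * (b - 1) * (2 * b - 1) - 12 * sumMulFloor a b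
      - 3 * b * (b - 1) := by
  have hb' : (b : ℚ) ≠ 0 := by positivity
  have hterm : ∀ j ∈ Icc 1 (b - 1),
      12 * b * (saw (((a * j : ℤ) : ℚ) / b) * saw ((j : ℚ) / b))
        = 12 * a / b * (j : ℚ) ^ 2 - 6 * (a + 1) * (j : ℚ)
          - 12 * ((j : ℚ) * ((a * j / b : ℤ) : ℚ))
          + 6 * b * ((a * j / b : ℤ) : ℚ) + 3 * b := fun j hj => by
    rw [saw_mul_div_of_mem_Icc hb hab hj, saw_div_of_mem_Icc hb hj]
    field_simp
    ring
  rw [dedekindS, mul_sum, sum_congr rfl hterm]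
  simp only [sum_add_distrib, sum_sub_distrib, ← mul_sum, sum_const, nsmul_eq_mul]
  rw [sum_Icc_one_sq (by omega), sum_Icc_one_id (by omega), sum_Icc_mul_ediv hb hab,
    card_Icc_cast (by omega), ← sumMulFloor]
  push_cast
  field_simp
  ring

lemma mul_emod_mem_Icc {a b j : ℤ} (hb : 0 < b) (hab : IsCoprime a b)
    (hj : j ∈ Icc 1 (b - 1)) :
    a * j % b ∈ Icc 1 (b - 1) := by
  rw [mem_Icc] at hj ⊢
  have h₀ := Int.emod_nonneg (a * j) hb.ne'
  have h₁ := Int.emod_lt_of_pos (a * j) hb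
  have h₂ : a * j % b ≠ 0 := fun h =>
    not_dvd_mul_of_isCoprime hab (by omega) (by omega) (Int.dvd_of_emod_eq_zero h)
  omega

lemma mul_emod_mul_emod {u a v b j : ℤ} (huv : u * a + v * b = 1) (hj : j ∈ Icc 1 (b - 1)) :
    u * (a * j % b) % b = j := by
  rw [mem_Icc] at hj
  have h : u * (a * j % b) ≡ j [ZMOD b] :=
    ((Int.mod_modEq _ _).mul_left u).trans
      (Int.modEq_iff_dvd.mpr ⟨v * j, by linear_combination -j * huv⟩)
  rw [h, Int.emod_eq_of_lt (by omega) (by omega)]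

lemma sum_comp_saw_mul_div {a b : ℤ} (hb : 0 < b) (hab : IsCoprime a b) (g : ℚ → ℚ) :
    ∑ j ∈ Icc 1 (b - 1), g (saw (((a * j : ℤ) : ℚ) / b))
      = ∑ j ∈ Icc 1 (b - 1), g (saw ((j : ℚ) / b)) := by
  have hsaw (j : ℤ) : saw (((a * j : ℤ) : ℚ) / b) = saw (((a * j % b : ℤ) : ℚ) / b) := by
    rw [← saw_add_intCast (((a * j % b : ℤ) : ℚ) / b) (a * j / b)]
    congr 1
    field_simp
    exact_mod_cast (Int.emod_add_mul_ediv (a * j) b).symm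
  obtain ⟨u, v, huv⟩ := hab
  have hua : IsCoprime u b := ⟨a, v, by linarith⟩
  simp only [hsaw]
  exact sum_nbij' (fun j => a * j % b) (fun j => u * j % b)
    (fun j hj => mul_emod_mem_Icc hb ⟨u, v, huv⟩ hj) (fun j hj => mul_emod_mem_Icc hb hua hj)
    (fun j hj => mul_emod_mul_emod huv hj) (fun j hj => mul_emod_mul_emod (by linarith) hj)
    (fun _ _ => rfl)

lemma sumFloorSq_eq_sumMulFloor {a b : ℤ} (hb : 0 < b) (hab : IsCoprime a b) :
    6 * b * sumFloorSq a b
      = 12 * a * sumMulFloor a b - (a ^ 2 - 1) * (b - 1) * (2 * b - 1) := by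
  have hb' : (b : ℚ) ≠ 0 := by positivity
  have hsq : ∀ j ∈ Icc 1 (b - 1), b ^ 2 * saw (((a * j : ℤ) : ℚ) / b) ^ 2
      = a ^ 2 * (j : ℚ) ^ 2 + b ^ 2 * ((a * j / b : ℤ) : ℚ) ^ 2 + b ^ 2 / 4
        - 2 * a * b * ((j : ℚ) * ((a * j / b : ℤ) : ℚ)) - a * b * (j : ℚ)
        + b ^ 2 * ((a * j / b : ℤ) : ℚ) := fun j hj => by
    rw [saw_mul_div_of_mem_Icc hb hab hj]
    field_simp
    ring
  have hsq₁ : ∀ j ∈ Icc 1 (b - 1), b ^ 2 * saw ((j : ℚ) / b) ^ 2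
      = (j : ℚ) ^ 2 - b * (j : ℚ) + b ^ 2 / 4 := fun j hj => by
    rw [saw_div_of_mem_Icc hb hj]
    field_simp
    ring
  have h := congrArg (fun s => (b : ℚ) ^ 2 * s) (sum_comp_saw_mul_div hb hab (· ^ 2))
  simp only [mul_sum] at h
  rw [sum_congr rfl hsq, sum_congr rfl hsq₁] at h
  simp only [sum_add_distrib, sum_sub_distrib, ← mul_sum, sum_const, nsmul_eq_mul] at h
  rw [sum_Icc_one_sq (by omega), sum_Icc_one_id (by omega), sum_Icc_mul_ediv hb hab,
    card_Icc_cast (by omega), ← sumMulFloor, ← sumFloorSq] at h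
  push_cast at h
  apply mul_left_cancel₀ hb'
  linear_combination 6 * h

theorem dedekindS_add_dedekindS {a b : ℤ} (ha : 0 < a) (hb : 0 < b) (hab : IsCoprime a b) :
    dedekindS a b + dedekindS b a = (a ^ 2 + b ^ 2 + 1 - 3 * a * b) / (12 * a * b) := by
  rw [eq_div_iff (by positivity)]
  linear_combination (a : ℚ) * dedekindS_eq_sumMulFloor hb hab
    + (b : ℚ) * dedekindS_eq_sumMulFloor ha hab.symm
    + sumFloorSq_eq_sumMulFloor hb hab - 6 * (b : ℚ) * sumFloorSq_eq_sumMulFloor_swap ha hb hab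

lemma dedekindS_add_mul_self (a c : ℤ) {m : ℤ} (hm : 0 < m) :
    dedekindS (a + c * m) m = dedekindS a m := by
  refine sum_congr rfl fun j _ => ?_
  have e : (((a + c * m) * j : ℤ) : ℚ) / m
      = ((a * j : ℤ) : ℚ) / m + ((c * j : ℤ) : ℚ) := by
    push_cast
    field_simp
  rw [e, saw_add_intCast]

lemma dedekindS_neg (a m : ℤ) : dedekindS (-a) m = -dedekindS a m := by
  rw [dedekindS, dedekindS, ← sum_neg_distrib]
  refine sum_congr rfl fun j _ => ?_
  rw [neg_mul, Int.cast_neg, neg_div, saw_neg, neg_mul]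

lemma dedekindS_eq_sum_Ico (a : ℤ) {m : ℤ} (hm : 0 < m) :
    dedekindS a m = ∑ j ∈ Ico 0 m, saw (((a * j : ℤ) : ℚ) / m) * saw ((j : ℚ) / m) := by
  rw [dedekindS, show Ico 0 m = insert 0 (Icc 1 (m - 1)) by ext; simp; omega,
    sum_insert (by simp)]
  simp [saw]

lemma dedekindS_two_mul_two_mul (a : ℤ) {m : ℤ} (hm : 0 < m) :
    dedekindS (2 * a) (2 * m) = dedekindS a m := by
  rw [dedekindS_eq_sum_Ico _ (by omega), dedekindS_eq_sum_Ico _ hm,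
    ← Ico_union_Ico_eq_Ico (b := m) (by omega) (by omega),
    sum_union (Ico_disjoint_Ico_consecutive _ _ _),
    show Ico m (2 * m) = Ico (0 + m) (m + m) by rw [zero_add, two_mul], ← sum_Ico_add',
    ← sum_add_distrib]
  refine sum_congr rfl fun j _ => ?_
  have hm' : (m : ℚ) ≠ 0 := by positivity
  push_cast
  rw [show 2 * (a : ℚ) * j / (2 * m) = a * j / m by field_simp,
    show 2 * (a : ℚ) * (j + m) / (2 * m) = a * j / m + a by field_simp,
    show ((j : ℚ) + m) / (2 * m) = j / (2 * m) + 1 / 2 by field_simp, saw_add_intCast,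
    ← mul_add, saw_add_saw_add_half, show 2 * ((j : ℚ) / (2 * m)) = j / m by field_simp]

noncomputable def dedekindComb (h k : ℤ) : ℚ :=
  4 * dedekindS h (2 * k) + 4 * dedekindS (2 * h) k - 10 * dedekindS h k

lemma dedekindComb_add_two_mul_mul (a t : ℤ) {k : ℤ} (hk : 0 < k) :
    dedekindComb (a + 2 * k * t) k = dedekindComb a k := by
  rw [dedekindComb, dedekindComb, show a + 2 * k * t = a + t * (2 * k) by ring,
    dedekindS_add_mul_self _ _ (by omega),
    show 2 * (a + t * (2 * k)) = 2 * a + 4 * t * k by ring,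
    dedekindS_add_mul_self _ _ hk, show a + t * (2 * k) = a + 2 * t * k by ring,
    dedekindS_add_mul_self _ _ hk]

lemma dedekindComb_neg (a k : ℤ) : dedekindComb (-a) k = -dedekindComb a k := by
  simp only [dedekindComb, mul_neg, dedekindS_neg]
  ring

lemma dedekindComb_one (h : ℤ) : dedekindComb h 1 = 0 := by
  norm_num [dedekindComb, dedekindS, saw]

lemma dedekindComb_two_mul_add_dedekindComb {m k : ℤ} (hm : 0 < m) (hk : 0 < k)
    (hmk : IsCoprime (2 * m) k) (hko : Odd k) :
    dedekindComb (2 * m) k + dedekindComb k (2 * m) = 1 / 2 := by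
  have h₂ : IsCoprime 2 k := by
    obtain ⟨t, rfl⟩ := hko
    exact ⟨-t, 1, by ring⟩
  have r₁ := dedekindS_add_dedekindS hm hk (hmk.of_mul_left_right)
  have r₂ := dedekindS_add_dedekindS (a := 2 * (2 * m)) (by omega) hk (h₂.mul_left hmk)
  have r₃ := dedekindS_add_dedekindS (by omega) hk hmk
  simp only [dedekindComb, dedekindS_two_mul_two_mul _ hk, dedekindS_two_mul_two_mul _ hm]
  have hm' : (m : ℚ) ≠ 0 := by positivity
  have hk' : (k : ℚ) ≠ 0 := by positivity
  linear_combination (norm := skip) 4 * r₁ + 4 * r₂ - 10 * r₃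
  push_cast
  field_simp
  ring

lemma dedekindComb_add_dedekindComb {h k : ℤ} (hh : 0 < h) (hk : 0 < k) (hco : IsCoprime h k)
    (hodd : Odd (h + k)) : dedekindComb h k + dedekindComb k h = 1 / 2 := by
  rw [Int.odd_iff] at hodd
  rcases Int.even_or_odd h with ⟨m, rfl⟩ | hho
  · rw [← two_mul] at hco ⊢
    exact dedekindComb_two_mul_add_dedekindComb (by omega) hk hco (Int.odd_iff.mpr (by omega))
  · obtain ⟨m, rfl⟩ : Even k := Int.even_iff.mpr (by rw [Int.odd_iff] at hho; omega)
    rw [← two_mul] at hco ⊢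
    rw [add_comm]
    exact dedekindComb_two_mul_add_dedekindComb (by omega) hh hco.symm hho

noncomputable def signSum (h k : ℤ) : ℚ := ∑ j ∈ Icc 1 (k - 1), (-1 : ℚ) ^ (j + h * j / k)

lemma neg_one_zpow_eq_of_even_sub_s7 {e₁ e₂ : ℤ} (h : Even (e₁ - e₂)) :
    (-1 : ℚ) ^ e₁ = (-1) ^ e₂ := by
  rw [← sub_add_cancel e₁ e₂, zpow_add₀ (by norm_num), h.neg_one_zpow, one_mul]

lemma neg_one_zpow_eq_neg_of_odd_sub {e₁ e₂ : ℤ} (h : Odd (e₁ - e₂)) :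
    (-1 : ℚ) ^ e₁ = -(-1) ^ e₂ := by
  rw [← sub_add_cancel e₁ e₂, zpow_add₀ (by norm_num), h.neg_one_zpow, neg_one_mul]

lemma neg_one_zpow_eq (e : ℤ) : (-1 : ℚ) ^ e = 1 - 2 * e + 4 * (e / 2 : ℤ) := by
  have he : (e : ℚ) = (e % 2 : ℤ) + 2 * (e / 2 : ℤ) := by
    exact_mod_cast (Int.emod_add_mul_ediv e 2).symm
  rw [neg_one_zpow_eq_of_even_sub_s7 (e₂ := e % 2) (Int.even_iff.mpr (by omega)), he]
  rcases Int.emod_two_eq_zero_or_one e with h | h <;> rw [h] <;> norm_num <;> ring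

lemma neg_one_zpow_add_mul_ediv {h k : ℤ} (j : ℤ) (hk : 0 < k) :
    (-1 : ℚ) ^ (j + h * j / k)
      = 1 - 2 * (((h + k) * j / k : ℤ) : ℚ) + 4 * (((h + k) * j / (2 * k) : ℤ) : ℚ) := by
  rw [neg_one_zpow_eq, show j + h * j / k = (h + k) * j / k by
      rw [add_mul, mul_comm k j, Int.add_mul_ediv_right _ _ hk.ne', add_comm],
    Int.ediv_ediv_of_nonneg hk.le, mul_comm k 2]

lemma two_mul_B1 {h k : ℤ} (hk : 0 < k) (hco : IsCoprime h k) (hodd : Odd (h + k)) :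
    2 * B1 h k = (h - 1) * signSum h k := by
  set F : ℤ → ℚ := fun j => (-1 : ℚ) ^ (j + h * j / k) * ((h * j / k : ℤ) : ℚ) with hF
  have hB : B1 h k = ∑ j ∈ Icc 1 (k - 1), F j := by
    simp only [B1, Rat.floor_intCast_div_intCast _ hk, hF]
  have hreflect : ∀ j ∈ Icc 1 (k - 1),
      F (k - 1 + 1 - j) = (-1 : ℚ) ^ (j + h * j / k) * (h - 1) - F j := fun j hj => by
    have hq := mul_ediv_add_mul_sub_ediv hk hco hj
    simp only [hF]
    rw [sub_add_cancel, show h * (k - j) / k = h - 1 - h * j / k by omega,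
      neg_one_zpow_eq_of_even_sub_s7 (e₂ := j + h * j / k)]
    · push_cast
      ring
    · rw [Int.odd_iff] at hodd
      exact Int.even_iff.mpr (by omega)
  have h := sum_Icc_one_reflect (k - 1) F
  rw [sum_congr rfl hreflect, sum_sub_distrib, ← sum_mul, ← signSum] at h
  rw [hB]
  linarith

lemma signSum_add_two_mul_mul (a t : ℤ) {k : ℤ} (hk : 0 < k) :
    signSum (a + 2 * k * t) k = signSum a k := by
  refine sum_congr rfl fun j _ => neg_one_zpow_eq_of_even_sub_s7 ?_
  rw [show (a + 2 * k * t) * j = a * j + 2 * t * j * k by ring,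
    Int.add_mul_ediv_right _ _ hk.ne']
  exact ⟨t * j, by ring⟩

lemma signSum_neg {a k : ℤ} (hk : 0 < k) (hak : IsCoprime a k) :
    signSum (-a) k = -signSum a k := by
  rw [signSum, signSum, ← sum_neg_distrib]
  refine sum_congr rfl fun j hj => neg_one_zpow_eq_neg_of_odd_sub ?_
  rw [mem_Icc] at hj
  have h : a * j / k + -a * j / k = -1 := by
    rw [Int.ediv_add_ediv_of_dvd_add hk (not_dvd_mul_of_isCoprime hak (by omega) (by omega))
      ⟨0, by ring⟩, show a * j + -a * j = 0 by ring, Int.zero_ediv, zero_sub]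
  exact ⟨-(a * j / k) - 1, by omega⟩

/-- With `e = ⌊(h+k)j/k⌋ = j + ⌊hj/k⌋` we have `(-1)^e = 1 - 2e + 4⌊e/2⌋`; the sum of
the `⌊e/2⌋ = ⌊(h+k)j/(2k)⌋` is then counted along the other axis. -/
lemma signSum_eq {h k M : ℤ} (hh : 0 < h) (hk : 0 < k) (hco : IsCoprime h k)
    (hM : h + k = 2 * M + 1) :
    signSum h k = (k - 1) * (2 - (h + k))
      + 4 * ∑ z ∈ Icc 1 M, ((k - 1 - 2 * k * z / (h + k) : ℤ) : ℚ) := by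
  have hHk : IsCoprime (h + k) k := by simpa using hco.add_mul_right_left 1
  have hH2k : IsCoprime (h + k) (2 * k) := IsCoprime.mul_right ⟨1, -M, by linarith⟩ hHk
  have hterm : ∀ j ∈ Icc 1 (k - 1), (-1 : ℚ) ^ (j + h * j / k)
      = 1 - 2 * (((h + k) * j / k : ℤ) : ℚ)
        + 4 * ∑ _m ∈ Icc 1 ((h + k) * j / (2 * k)), 1 := by
    intro j hj
    have hq : 0 ≤ (h + k) * j / (2 * k) :=
      Int.ediv_nonneg (by nlinarith [(mem_Icc.mp hj).1]) (by omega)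
    rw [sum_const, nsmul_eq_mul, mul_one, card_Icc_cast (by omega), neg_one_zpow_add_mul_ediv j hk]
    push_cast
    ring
  have hnp : (h + k) * (k - 1) / (2 * k) ≤ M := by
    have : (h + k) * (k - 1) / (2 * k) < M + 1 :=
      (Int.ediv_lt_iff_lt_mul (by omega)).mpr (by rw [hM]; nlinarith)
    omega
  have hpn : 2 * k * M / (h + k) ≤ k - 1 := by
    have : 2 * k * M / (h + k) < k :=
      (Int.ediv_lt_iff_lt_mul (by omega)).mpr (by rw [hM]; nlinarith)
    omega
  rw [signSum, sum_congr rfl hterm, sum_add_distrib, sum_sub_distrib, ← mul_sum, ← mul_sum,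
    sum_Icc_mul_ediv hk hHk, sum_const, nsmul_eq_mul, card_Icc_cast (by omega),
    sum_sum_Icc_mul_ediv_comm (by omega) (by omega) hnp hpn (fun z hz =>
      not_dvd_mul_of_isCoprime hH2k.symm (mem_Icc.mp hz).1 (by linarith [(mem_Icc.mp hz).2]))]
  simp only [mul_one]
  push_cast
  ring

theorem signSum_add_signSum {h k : ℤ} (hh : 0 < h) (hk : 0 < k) (hco : IsCoprime h k)
    (hodd : Odd (h + k)) : signSum h k + signSum k h = -1 := by
  obtain ⟨M, hM⟩ := hodd
  have hMq : (h : ℚ) + k = 2 * M + 1 := by exact_mod_cast hM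
  have hH2 : IsCoprime (h + k) 2 := ⟨1, -M, by linarith⟩
  have hpair : ∀ z ∈ Icc 1 M, ((k - 1 - 2 * k * z / (h + k) : ℤ) : ℚ)
      + ((h - 1 - 2 * h * z / (k + h) : ℤ) : ℚ) = 2 * M - 2 * z := by
    intro z hz
    have hkH : IsCoprime (2 * k) (h + k) :=
      (hH2.mul_right (by simpa using hco.add_mul_right_left 1)).symm
    have h₁ := Int.ediv_add_ediv_of_dvd_add (y := 2 * h * z) (by omega)
      (not_dvd_mul_of_isCoprime hkH (mem_Icc.mp hz).1 (by linarith [(mem_Icc.mp hz).2]))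
      ⟨2 * z, by ring⟩
    rw [show 2 * k * z + 2 * h * z = (h + k) * (2 * z) by ring,
      Int.mul_ediv_cancel_left _ (by omega)] at h₁
    rw [add_comm k h]
    have h₂ : ((2 * k * z / (h + k) : ℤ) : ℚ) + ((2 * h * z / (h + k) : ℤ) : ℚ)
        = 2 * z - 1 := by
      exact_mod_cast h₁
    push_cast
    linear_combination hMq - h₂
  have hsum : ∑ z ∈ Icc 1 M, ((k - 1 - 2 * k * z / (h + k) : ℤ) : ℚ)
      + ∑ z ∈ Icc 1 M, ((h - 1 - 2 * h * z / (k + h) : ℤ) : ℚ) = M ^ 2 - M := by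
    rw [← sum_add_distrib, sum_congr rfl hpair, sum_sub_distrib, sum_const, nsmul_eq_mul,
      card_Icc_cast (by omega), ← mul_sum, sum_Icc_one_id (by omega)]
    push_cast
    ring
  rw [signSum_eq hh hk hco hM, signSum_eq hk hh hco.symm (by linarith)]
  linear_combination 4 * hsum - (2 * M + h + k - 3 : ℚ) * hMq

lemma dedekindComb_eq_of_swap {h k : ℤ} (hh : 0 < h) (hk : 0 < k) (hco : IsCoprime h k)
    (hodd : Odd (h + k)) (hswap : dedekindComb k h = -signSum k h / 2) :
    dedekindComb h k = -signSum h k / 2 := by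
  linear_combination dedekindComb_add_dedekindComb hh hk hco hodd - hswap
    + signSum_add_signSum hh hk hco hodd / 2

lemma exists_eq_add_or_eq_neg_add {h k : ℤ} (hk : 2 ≤ k) (hco : IsCoprime h k) :
    ∃ r t : ℤ, 0 < r ∧ r < k ∧ (h = r + 2 * k * t ∨ h = -r + 2 * k * t) := by
  have hdvd : ¬ k ∣ h := by simpa using not_dvd_mul_of_isCoprime hco one_pos (by omega)
  obtain ⟨q, r, hr₀, hr₁, hqr⟩ : ∃ q r, 0 ≤ r ∧ r < 2 * k ∧ h = r + 2 * k * q :=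
    ⟨h / (2 * k), h % (2 * k), Int.emod_nonneg h (by omega), Int.emod_lt_of_pos h (by omega),
      (Int.emod_add_mul_ediv h (2 * k)).symm⟩
  have hr₀' : r ≠ 0 := by
    rintro rfl
    exact hdvd ⟨2 * q, by rw [hqr]; ring⟩
  have hrk : r ≠ k := by
    rintro rfl
    exact hdvd ⟨1 + 2 * q, by rw [hqr]; ring⟩
  rcases hrk.lt_or_gt with hlt | hgt
  · exact ⟨r, q, by omega, hlt, .inl hqr⟩
  · exact ⟨2 * k - r, q + 1, by omega, by omega, .inr (by rw [hqr]; ring)⟩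

theorem dedekindComb_eq_neg_signSum_div_two {h k : ℤ} (hk : 0 < k) (hco : IsCoprime h k)
    (hodd : Odd (h + k)) : dedekindComb h k = -signSum h k / 2 := by
  obtain ⟨n, hn⟩ : ∃ n : ℕ, k.toNat = n := ⟨_, rfl⟩
  induction n using Nat.strong_induction_on generalizing h k with
  | _ n ih =>
    rcases (show k = 1 ∨ 2 ≤ k by omega) with rfl | hk₂
    · simp [dedekindComb_one, signSum]
    obtain ⟨r, t, hr, hrk, hrt | hrt⟩ := exists_eq_add_or_eq_neg_add hk₂ hco
    all_goals subst hrt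
    · have hrco : IsCoprime r k := by
        rw [show r + 2 * k * t = r + k * (2 * t) by ring] at hco
        exact hco.of_add_mul_left_left
      have hrodd : Odd (r + k) := by
        rw [show r + k = r + 2 * k * t + k - 2 * (k * t) by ring]
        exact hodd.sub_even (even_two_mul _)
      rw [dedekindComb_add_two_mul_mul _ _ hk, signSum_add_two_mul_mul _ _ hk]
      exact dedekindComb_eq_of_swap hr hk hrco hrodd
        (ih r.toNat (by omega) hr hrco.symm (by rwa [add_comm]) rfl)
    · have hrco : IsCoprime r k := by
        rw [show -r + 2 * k * t = -r + k * (2 * t) by ring] at hco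
        exact (IsCoprime.neg_left_iff _ _).mp hco.of_add_mul_left_left
      have hrodd : Odd (r + k) := by
        rw [show r + k = -(-r + 2 * k * t + k) + 2 * (k * t + k) by ring]
        exact hodd.neg.add_even (even_two_mul _)
      rw [dedekindComb_add_two_mul_mul _ _ hk, signSum_add_two_mul_mul _ _ hk, dedekindComb_neg,
        signSum_neg hk hrco, dedekindComb_eq_of_swap hr hk hrco hrodd
        (ih r.toNat (by omega) hr hrco.symm (by rwa [add_comm]) rfl)]
      ring

theorem stmt_7_general (h k : ℤ) (hk : 0 < k) (hco : IsCoprime h k)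
    (hodd : Odd (h + k)) :
    B1 h k = (1 - (h : ℚ))
      * (4 * dedekindS h (2 * k) + 4 * dedekindS (2 * h) k - 10 * dedekindS h k) := by
  have hB := two_mul_B1 hk hco hodd
  have hD := dedekindComb_eq_neg_signSum_div_two hk hco hodd
  rw [dedekindComb] at hD
  rw [hD]
  linarith

theorem stmt_7 (h k : ℤ) (hh : 0 < h) (hk : 0 < k) (hco : IsCoprime h k)
    (hodd : Odd (h + k)) :
    B1 h k = (1 - (h : ℚ))
      * (4 * dedekindS h (2 * k) + 4 * dedekindS (2 * h) k - 10 * dedekindS h k) :=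
  stmt_7_general h k hk hco hodd
end

section
/- Let n be a positive natural number and set h = F_{6n-1} and k = F_{6n+1}, where F_m is the m-th Fibonacci number. Then k·B₁(h,k) + h·B₁(k,h) = (h² - h - k + k²)/2 - hk + 1. -/
/-!
For odd coprime `h, k` one has `j + ⌊hj/k⌋ ≡ hj mod k (mod 2)`, so
`k·B₁(h,k) = T(h,k) - (k-1)/2` with `T(h,k) = Σ_{0<j<k} (-1)^(hj mod k)·hj`, because `hj mod k`
runs over `(0,k)` and `Σ_{0≤r<k} (-1)^r r = (k-1)/2`.

To show `T(h,k) + T(k,h) = (hk-1)/2`, weight `m ∈ [0,hk)` by `ε(m) = (-1)^(m mod h + m mod k)`.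
By the Chinese remainder theorem `Σ ε = 1`, and `ε` is invariant under `m ↦ hk-1-m`, so
`Σ ε(m)·m = (hk-1)/2`. The multiples of `h` contribute `T(h,k)`, those of `k` contribute `T(k,h)`;
on the remaining `m` the weight `ε` is invariant under `m ↦ hk-m` and sums to `0`, so they
contribute nothing. Hence `k·B₁(h,k) + h·B₁(k,h) = (h-1)(k-1)/2`, and for `h = F_{6n-1}`,
`k = F_{6n+1}` Cassini's identity `hk = (k-h)² + 1` turns this into the stated formula.
-/

open Finset

lemma neg_one_zpow_eq_of_even_sub_s14 {a b : ℤ} (hab : Even (a - b)) : (-1 : ℚ) ^ a = (-1) ^ b := by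
  rw [← sub_add_cancel a b, zpow_add₀ (by norm_num), hab.neg_one_zpow, one_mul]

lemma two_mul_sum_mul_self_of_reflect {s : Finset ℤ} {c : ℤ} {f : ℤ → ℚ}
    (hs : ∀ m ∈ s, c - m ∈ s) (hf : ∀ m ∈ s, f (c - m) = f m) :
    2 * ∑ m ∈ s, f m * m = c * ∑ m ∈ s, f m := by
  have hreflect : ∑ m ∈ s, f m * m = ∑ m ∈ s, f m * (c - m : ℤ) :=
    sum_nbij' (c - ·) (c - ·) hs hs (fun m _ => sub_sub_cancel c m) (fun m _ => sub_sub_cancel c m)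
      (fun m hm => by rw [hf m hm, sub_sub_cancel])
  rw [two_mul, mul_sum]
  nth_rw 2 [hreflect]
  rw [← sum_add_distrib]
  exact sum_congr rfl fun m _ => by push_cast; ring

lemma sum_Ico_zero_neg_one_zpow {k : ℤ} (hko : Odd k) (hk : 0 ≤ k) :
    ∑ r ∈ Ico 0 k, (-1 : ℚ) ^ r = 1 := by
  lift k to ℕ using hk
  have hko : Odd k := by exact_mod_cast hko
  rw [Int.Ico_eq_finset_map, sum_map]
  simp [neg_one_geom_sum, Nat.not_even_iff_odd.mpr hko]

lemma sum_Ioo_zero_neg_one_zpow {k : ℤ} (hko : Odd k) (hk : 0 < k) :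
    ∑ r ∈ Ioo 0 k, (-1 : ℚ) ^ r = 0 := by
  have := sum_Ico_zero_neg_one_zpow hko hk.le
  rwa [← add_sum_Ioo_eq_sum_Ico hk, zpow_zero, add_eq_left] at this

lemma sum_Ioo_zero_neg_one_zpow_mul {k : ℤ} (hko : Odd k) (hk : 0 < k) :
    ∑ r ∈ Ioo 0 k, (-1 : ℚ) ^ r * r = (k - 1) / 2 := by
  have hreflect := two_mul_sum_mul_self_of_reflect (s := Ico 0 k) (c := k - 1)
    (f := fun r => (-1 : ℚ) ^ r) (fun m hm => by simp only [mem_Ico] at hm ⊢; omega)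
    (fun m _ => neg_one_zpow_eq_of_even_sub_s14 (by obtain ⟨t, rfl⟩ := hko; exact ⟨t - m, by ring⟩))
  rw [sum_Ico_zero_neg_one_zpow hko hk.le, ← add_sum_Ioo_eq_sum_Ico hk] at hreflect
  push_cast at hreflect
  linarith

lemma eq_of_dvd_sub_of_mem_Ico {N a b : ℤ} (ha : a ∈ Ico 0 N) (hb : b ∈ Ico 0 N) (hN : N ∣ a - b) :
    a = b := by
  rw [mem_Ico] at ha hb
  exact sub_eq_zero.mp (Int.eq_zero_of_abs_lt_dvd hN (abs_sub_lt_iff.2 ⟨by omega, by omega⟩))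

lemma sum_Ico_zero_mul_emod {h k : ℤ} (hk : 0 < k) (hcop : IsCoprime h k) (f : ℤ → ℚ) :
    ∑ j ∈ Ico 0 k, f (h * j % k) = ∑ r ∈ Ico 0 k, f r := by
  have hmaps : Set.MapsTo (fun j => h * j % k) (Ico 0 k : Set ℤ) (Ico 0 k : Set ℤ) := fun j _ =>
    mem_Ico.2 ⟨Int.emod_nonneg _ hk.ne', Int.emod_lt_of_pos _ hk⟩
  have hinj : Set.InjOn (fun j => h * j % k) (Ico 0 k : Set ℤ) := fun i hi j hj hij => by
    refine eq_of_dvd_sub_of_mem_Ico hi hj (hcop.symm.dvd_of_dvd_mul_left ?_)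
    rw [mul_sub]
    exact Int.ModEq.dvd (Eq.symm hij)
  exact sum_nbij _ hmaps hinj (surjOn_of_injOn_of_card_le _ hmaps hinj le_rfl) fun _ _ => rfl

lemma sum_Ioo_zero_mul_emod {h k : ℤ} (hk : 0 < k) (hcop : IsCoprime h k) (f : ℤ → ℚ) :
    ∑ j ∈ Ioo 0 k, f (h * j % k) = ∑ r ∈ Ioo 0 k, f r := by
  have := sum_Ico_zero_mul_emod hk hcop f
  rwa [← add_sum_Ioo_eq_sum_Ico hk, ← add_sum_Ioo_eq_sum_Ico hk, mul_zero, Int.zero_emod,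
    add_right_inj] at this

lemma sum_Ico_zero_emod_mul_emod {h k : ℤ} (hh : 0 < h) (hk : 0 < k) (hcop : IsCoprime h k)
    (f g : ℤ → ℚ) :
    ∑ m ∈ Ico 0 (h * k), f (m % h) * g (m % k) = (∑ a ∈ Ico 0 h, f a) * ∑ b ∈ Ico 0 k, g b := by
  rw [sum_mul_sum, ← sum_product']
  have hmaps : Set.MapsTo (fun m => (m % h, m % k)) (Ico 0 (h * k) : Set ℤ)
      (Ico 0 h ×ˢ Ico 0 k : Finset (ℤ × ℤ)) := fun m _ =>
    mem_product.2 ⟨mem_Ico.2 ⟨Int.emod_nonneg _ hh.ne', Int.emod_lt_of_pos _ hh⟩,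
      mem_Ico.2 ⟨Int.emod_nonneg _ hk.ne', Int.emod_lt_of_pos _ hk⟩⟩
  have hinj : Set.InjOn (fun m => (m % h, m % k)) (Ico 0 (h * k) : Set ℤ) := fun i hi j hj hij => by
    obtain ⟨hijh, hijk⟩ := Prod.mk.inj hij
    exact eq_of_dvd_sub_of_mem_Ico hi hj
      (hcop.mul_dvd (Int.ModEq.dvd hijh.symm) (Int.ModEq.dvd hijk.symm))
  have hcard : #(Ico 0 h ×ˢ Ico 0 k) ≤ #(Ico 0 (h * k)) := by
    simp [Int.card_Ico, Int.toNat_mul hh.le hk.le]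
  exact sum_nbij _ hmaps hinj (surjOn_of_injOn_of_card_le _ hmaps hinj hcard) fun _ _ => rfl

lemma sum_filter_dvd_Ioo_zero_mul {h k : ℤ} (hh : 0 < h) (F : ℤ → ℚ) :
    ∑ m ∈ (Ioo 0 (h * k)).filter (h ∣ ·), F m = ∑ j ∈ Ioo 0 k, F (h * j) := by
  have himage : (Ioo 0 (h * k)).filter (h ∣ ·) = (Ioo 0 k).image (h * ·) := by
    ext m
    simp only [mem_filter, mem_Ioo, mem_image]
    constructor
    · rintro ⟨⟨hpos, hlt⟩, j, rfl⟩
      exact ⟨j, ⟨pos_of_mul_pos_right hpos hh.le, lt_of_mul_lt_mul_left hlt hh.le⟩, rfl⟩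
    · rintro ⟨j, ⟨hpos, hlt⟩, rfl⟩
      exact ⟨⟨mul_pos hh hpos, mul_lt_mul_of_pos_left hlt hh⟩, dvd_mul_right h j⟩
  rw [himage, sum_image fun i _ j _ hij => mul_left_cancel₀ hh.ne' hij]

lemma sum_Ioo_zero_mul_split_by_dvd {h k : ℤ} (hh : 0 < h) (hk : 0 < k) (hcop : IsCoprime h k)
    (F : ℤ → ℚ) :
    ∑ m ∈ Ioo 0 (h * k), F m = ∑ j ∈ Ioo 0 k, F (h * j) + ∑ i ∈ Ioo 0 h, F (k * i)
      + ∑ m ∈ (Ioo 0 (h * k)).filter (fun m => ¬(h ∣ m ∨ k ∣ m)), F m := by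
  have hdisj : Disjoint ((Ioo 0 (h * k)).filter (h ∣ ·)) ((Ioo 0 (h * k)).filter (k ∣ ·)) := by
    refine disjoint_filter.2 fun m hm hhm hkm => ?_
    have := Int.le_of_dvd (mem_Ioo.1 hm).1 (hcop.mul_dvd hhm hkm)
    linarith [(mem_Ioo.1 hm).2]
  rw [← sum_filter_add_sum_filter_not _ (fun m => h ∣ m ∨ k ∣ m), filter_or, sum_union hdisj,
    sum_filter_dvd_Ioo_zero_mul hh, mul_comm h k, sum_filter_dvd_Ioo_zero_mul hk, mul_comm k h]

lemma emod_sub_one_sub_of_dvd {h c : ℤ} (hh : 0 < h) (hc : h ∣ c) (m : ℤ) :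
    (c - 1 - m) % h = h - 1 - m % h := by
  obtain ⟨t, rfl⟩ := hc
  rw [show h * t - 1 - m = h - 1 - m % h + h * (t - 1 - m / h) by rw [Int.emod_def]; ring,
    Int.add_mul_emod_self_left]
  exact Int.emod_eq_of_lt (by linarith [Int.emod_lt_of_pos m hh])
    (by linarith [Int.emod_nonneg m hh.ne'])

lemma emod_sub_of_dvd_of_not_dvd {h c m : ℤ} (hh : 0 < h) (hc : h ∣ c) (hm : ¬ h ∣ m) :
    (c - m) % h = h - m % h := by
  obtain ⟨t, rfl⟩ := hc
  rw [sub_eq_neg_add, Int.add_mul_emod_self_left, Int.neg_emod, if_neg hm,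
    Int.natAbs_of_nonneg hh.le]

def residueSign (h k m : ℤ) : ℚ := (-1) ^ (m % h + m % k)

lemma residueSign_sub_one_sub {h k : ℤ} (hh : 0 < h) (hk : 0 < k) (hho : Odd h) (hko : Odd k)
    (m : ℤ) : residueSign h k (h * k - 1 - m) = residueSign h k m := by
  rw [residueSign, residueSign, emod_sub_one_sub_of_dvd hh (dvd_mul_right h k),
    emod_sub_one_sub_of_dvd hk (dvd_mul_left k h)]
  obtain ⟨a, rfl⟩ := hho
  obtain ⟨b, rfl⟩ := hko
  exact neg_one_zpow_eq_of_even_sub_s14 ⟨a + b - m % (2 * a + 1) - m % (2 * b + 1), by ring⟩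

lemma residueSign_sub {h k m : ℤ} (hh : 0 < h) (hk : 0 < k) (hho : Odd h) (hko : Odd k)
    (hhm : ¬ h ∣ m) (hkm : ¬ k ∣ m) : residueSign h k (h * k - m) = residueSign h k m := by
  rw [residueSign, residueSign, emod_sub_of_dvd_of_not_dvd hh (dvd_mul_right h k) hhm,
    emod_sub_of_dvd_of_not_dvd hk (dvd_mul_left k h) hkm]
  obtain ⟨a, rfl⟩ := hho
  obtain ⟨b, rfl⟩ := hko
  exact neg_one_zpow_eq_of_even_sub_s14 ⟨a + b + 1 - m % (2 * a + 1) - m % (2 * b + 1), by ring⟩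

lemma residueSign_mul_left (h k j : ℤ) : residueSign h k (h * j) = (-1) ^ (h * j % k) := by
  rw [residueSign, Int.mul_emod_right, zero_add]

lemma residueSign_mul_right (h k i : ℤ) : residueSign h k (k * i) = (-1) ^ (k * i % h) := by
  rw [residueSign, Int.mul_emod_right, add_zero]

lemma sum_Ico_zero_residueSign {h k : ℤ} (hh : 0 < h) (hk : 0 < k) (hho : Odd h) (hko : Odd k)
    (hcop : IsCoprime h k) : ∑ m ∈ Ico 0 (h * k), residueSign h k m = 1 := by
  simp only [residueSign, zpow_add₀ (by norm_num : (-1 : ℚ) ≠ 0)]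
  rw [sum_Ico_zero_emod_mul_emod hh hk hcop (fun a => (-1 : ℚ) ^ a) (fun b => (-1 : ℚ) ^ b),
    sum_Ico_zero_neg_one_zpow hho hh.le, sum_Ico_zero_neg_one_zpow hko hk.le, one_mul]

lemma sum_Ioo_zero_residueSign_mul {h k : ℤ} (hh : 0 < h) (hk : 0 < k) (hho : Odd h)
    (hko : Odd k) (hcop : IsCoprime h k) :
    ∑ m ∈ Ioo 0 (h * k), residueSign h k m * m = (h * k - 1) / 2 := by
  have hhk := mul_pos hh hk
  have hreflect := two_mul_sum_mul_self_of_reflect (s := Ico 0 (h * k)) (c := h * k - 1)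
    (f := residueSign h k) (fun m hm => by simp only [mem_Ico] at hm ⊢; omega)
    (fun m _ => residueSign_sub_one_sub hh hk hho hko m)
  rw [sum_Ico_zero_residueSign hh hk hho hko hcop, ← add_sum_Ioo_eq_sum_Ico hhk] at hreflect
  push_cast at hreflect
  linarith

lemma sum_nonmultiple_residueSign {h k : ℤ} (hh : 0 < h) (hk : 0 < k) (hho : Odd h)
    (hko : Odd k) (hcop : IsCoprime h k) :
    ∑ m ∈ (Ioo 0 (h * k)).filter (fun m => ¬(h ∣ m ∨ k ∣ m)), residueSign h k m = 0 := by
  have hsplit := sum_Ioo_zero_mul_split_by_dvd hh hk hcop (residueSign h k)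
  have hfull := sum_Ico_zero_residueSign hh hk hho hko hcop
  rw [← add_sum_Ioo_eq_sum_Ico (mul_pos hh hk), hsplit] at hfull
  simp only [residueSign_mul_left, residueSign_mul_right, sum_Ioo_zero_mul_emod hk hcop,
    sum_Ioo_zero_mul_emod hh hcop.symm, sum_Ioo_zero_neg_one_zpow hho hh,
    sum_Ioo_zero_neg_one_zpow hko hk] at hfull
  simpa [residueSign] using hfull

lemma sum_nonmultiple_residueSign_mul {h k : ℤ} (hh : 0 < h) (hk : 0 < k) (hho : Odd h)
    (hko : Odd k) (hcop : IsCoprime h k) :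
    ∑ m ∈ (Ioo 0 (h * k)).filter (fun m => ¬(h ∣ m ∨ k ∣ m)), residueSign h k m * m = 0 := by
  have hreflect := two_mul_sum_mul_self_of_reflect (c := h * k) (f := residueSign h k)
    (s := (Ioo 0 (h * k)).filter (fun m => ¬(h ∣ m ∨ k ∣ m))) ?_ ?_
  · rw [sum_nonmultiple_residueSign hh hk hho hko hcop, mul_zero] at hreflect
    linarith
  · intro m hm
    simp only [mem_filter, mem_Ioo, not_or] at hm ⊢
    refine ⟨⟨by linarith, by linarith⟩, fun hd => hm.2.1 ?_, fun hd => hm.2.2 ?_⟩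
    · exact (dvd_sub_right (dvd_mul_right h k)).1 hd
    · exact (dvd_sub_right (dvd_mul_left k h)).1 hd
  · intro m hm
    simp only [mem_filter, not_or] at hm
    exact residueSign_sub hh hk hho hko hm.2.1 hm.2.2

noncomputable def altMulSum (h k : ℤ) : ℚ := ∑ j ∈ Ioo 0 k, (-1) ^ (h * j % k) * (h * j : ℤ)

lemma altMulSum_add_altMulSum {h k : ℤ} (hh : 0 < h) (hk : 0 < k) (hho : Odd h) (hko : Odd k)
    (hcop : IsCoprime h k) : altMulSum h k + altMulSum k h = (h * k - 1) / 2 := by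
  have hsplit := sum_Ioo_zero_mul_split_by_dvd hh hk hcop (fun m => residueSign h k m * m)
  simp only [residueSign_mul_left, residueSign_mul_right,
    sum_Ioo_zero_residueSign_mul hh hk hho hko hcop,
    sum_nonmultiple_residueSign_mul hh hk hho hko hcop, add_zero] at hsplit
  rw [hsplit, altMulSum, altMulSum]

lemma mul_B1 {h k : ℤ} (hk : 0 < k) (hho : Odd h) (hko : Odd k) (hcop : IsCoprime h k) :
    k * B1 h k = altMulSum h k - (k - 1) / 2 := by
  have hIcc : Icc 1 (k - 1) = Ioo 0 k := by ext; simp only [mem_Icc, mem_Ioo]; omega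
  have hterm (j : ℤ) : (k : ℚ) * ((-1) ^ (j + ⌊((h * j : ℤ) : ℚ) / k⌋) * ⌊((h * j : ℤ) : ℚ) / k⌋)
      = (-1) ^ (h * j % k) * (h * j : ℤ) - (-1) ^ (h * j % k) * (h * j % k : ℤ) := by
    rw [Int.floor_div_cast_of_nonneg hk.le, Int.floor_intCast, Int.emod_def]
    have hsign : (-1 : ℚ) ^ (j + h * j / k) = (-1) ^ (h * j - k * (h * j / k)) := by
      obtain ⟨a, rfl⟩ := hho
      obtain ⟨b, rfl⟩ := hko
      exact neg_one_zpow_eq_of_even_sub_s14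
        ⟨-a * j + (b + 1) * ((2 * a + 1) * j / (2 * b + 1)), by ring⟩
    rw [hsign]
    push_cast
    ring
  rw [B1, hIcc, mul_sum, sum_congr rfl fun j _ => hterm j, sum_sub_distrib,
    sum_Ioo_zero_mul_emod hk hcop (fun r => (-1 : ℚ) ^ r * r),
    sum_Ioo_zero_neg_one_zpow_mul hko hk, altMulSum]

theorem mul_B1_add_mul_B1 {h k : ℤ} (hh : 0 < h) (hk : 0 < k) (hho : Odd h) (hko : Odd k)
    (hcop : IsCoprime h k) : k * B1 h k + h * B1 k h = (h - 1) * (k - 1) / 2 := by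
  rw [mul_B1 hk hho hko hcop, mul_B1 hh hko hho hcop.symm]
  linear_combination altMulSum_add_altMulSum hh hk hho hko hcop

lemma odd_fib_of_not_three_dvd {m : ℕ} (hm : ¬ 3 ∣ m) : Odd (Nat.fib m) := by
  have hgcd : Nat.gcd m 3 = 1 :=
    Nat.coprime_comm.1 ((Nat.Prime.coprime_iff_not_dvd Nat.prime_three).2 hm)
  have := Nat.fib_gcd m 3
  rw [hgcd, Nat.fib_one, show Nat.fib 3 = 2 by rfl] at this
  exact Nat.coprime_two_right.1 this.symm

lemma fib_mul_fib_add_two_of_odd {a : ℕ} (ha : Odd a) :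
    (Nat.fib a : ℤ) * Nat.fib (a + 2) = Nat.fib (a + 1) ^ 2 + 1 := by
  have hcassini := Int.fib_succ_mul_fib_pred_sub_fib_sq (a + 1 : ℕ)
  rw [Int.natAbs_natCast, ha.add_one.neg_one_pow,
    show ((a + 1 : ℕ) : ℤ) + 1 = (a + 2 : ℕ) by push_cast; ring,
    show ((a + 1 : ℕ) : ℤ) - 1 = a by push_cast; ring] at hcassini
  simp only [Int.fib_natCast] at hcassini
  linear_combination hcassini

theorem stmt_14 (n : ℕ) (hn : 0 < n) (h k : ℤ)
    (hdef : h = (Nat.fib (6 * n - 1) : ℤ)) (kdef : k = (Nat.fib (6 * n + 1) : ℤ)) :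
    (k : ℚ) * B1 h k + (h : ℚ) * B1 k h
      = ((h : ℚ) ^ 2 - (h : ℚ) - (k : ℚ) + (k : ℚ) ^ 2) / 2 - (h : ℚ) * (k : ℚ) + 1 := by
  have hodd_index : Odd (6 * n - 1) := ⟨3 * n - 1, by omega⟩
  rw [show 6 * n + 1 = 6 * n - 1 + 2 by omega] at kdef
  have hcassini : h * k = (k - h) ^ 2 + 1 := by
    rw [hdef, kdef, fib_mul_fib_add_two_of_odd hodd_index, Nat.fib_add_two, Nat.cast_add]
    ring
  have hh : 0 < h := hdef ▸ Int.natCast_pos.2 (Nat.fib_pos.2 (by omega))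
  have hk : 0 < k := kdef ▸ Int.natCast_pos.2 (Nat.fib_pos.2 (by omega))
  have hho : Odd h := hdef ▸ (odd_fib_of_not_three_dvd (by omega)).natCast
  have hko : Odd k := kdef ▸ (odd_fib_of_not_three_dvd (by omega)).natCast
  have hcop : IsCoprime h k := ⟨3 * k - h, -k, by linear_combination hcassini⟩
  rw [mul_B1_add_mul_B1 hh hk hho hko hcop]
  have hcassiniQ : (h * k : ℚ) = (k - h) ^ 2 + 1 := by exact_mod_cast hcassini
  linear_combination (1 / 2 : ℚ) * hcassiniQ
end
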